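/- Let 0 ≤ r < m with m + r even and (m, r) ≠ (2, 0), and let g be an r-plateaued Boolean function in m variables with no nonzero linear structure. Set D_g = g⁻¹(1) and let y₀ ∈ D_g. Then the set E_g = {y + y₀ : y ∈ D_g} spans 𝔽₂^m over 𝔽₂ (equivalently, E_g contains a basis of 𝔽₂^m). -/

import Mathlib

open Finset

/-- dot product on 𝔽₂^m -/
def dotp {m : ℕ} (a x : Fin m → ZMod 2) : ZMod 2 := ∑ i, a i * x i

/-- (−1)^a for a ∈ 𝔽₂, as an integer -/
def sgn (a : ZMod 2) : ℤ := if a = 0 then 1 else -1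

/-- Walsh transform of f on a finite subset P of 𝔽₂^m -/
def walsh {m : ℕ} (P : Finset (Fin m → ZMod 2)) (f : (Fin m → ZMod 2) → ZMod 2)
    (u : Fin m → ZMod 2) : ℤ :=
  ∑ x ∈ P, sgn (f x + dotp u x)

/-- Walsh transform of f on all of 𝔽₂^m -/
def walshF {m : ℕ} (f : (Fin m → ZMod 2) → ZMod 2) (u : Fin m → ZMod 2) : ℤ :=
  walsh Finset.univ f u



lemma sgn_add (x y : ZMod 2) : sgn (x + y) = sgn x * sgn y := by revert x y; decide

lemma sgn_sum {ι : Type*} (s : Finset ι) (f : ι → ZMod 2) :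
    sgn (∑ i ∈ s, f i) = ∏ i ∈ s, sgn (f i) := by
  induction s using Finset.cons_induction with
  | empty => simp [sgn]
  | cons i s hi ih => rw [Finset.sum_cons, Finset.prod_cons, sgn_add, ih]

lemma dotp_add_left {m : ℕ} (a b x : Fin m → ZMod 2) :
    dotp (a + b) x = dotp a x + dotp b x := by
  simp [dotp, add_mul, Finset.sum_add_distrib]

lemma dotp_add_right {m : ℕ} (a x y : Fin m → ZMod 2) :
    dotp a (x + y) = dotp a x + dotp a y := by
  simp [dotp, mul_add, Finset.sum_add_distrib]

lemma dotp_comm {m : ℕ} (a x : Fin m → ZMod 2) : dotp a x = dotp x a := by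
  simp [dotp, mul_comm]

lemma pi_add_self {m : ℕ} (x : Fin m → ZMod 2) : x + x = 0 := by
  have h : ∀ t : ZMod 2, t + t = 0 := by decide
  funext i; exact h (x i)

lemma sum_sgn_dotp {m : ℕ} (v : Fin m → ZMod 2) :
    ∑ u : Fin m → ZMod 2, sgn (dotp u v) = if v = 0 then 2 ^ m else 0 := by
  have h1 : ∀ u : Fin m → ZMod 2, sgn (dotp u v) = ∏ i, sgn (u i * v i) := by
    intro u; exact sgn_sum _ _
  simp_rw [h1]
  rw [← Fintype.prod_sum (fun i (t : ZMod 2) => sgn (t * v i))]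
  have h2 : ∀ w : ZMod 2, ∑ t : ZMod 2, sgn (t * w) = if w = 0 then 2 else 0 := by decide
  simp_rw [h2]
  by_cases hv : v = 0
  · simp [hv]
  · rw [if_neg hv]
    obtain ⟨i, hi⟩ : ∃ i, v i ≠ 0 := by
      by_contra h; push_neg at h; exact hv (funext h)
    exact Finset.prod_eq_zero (Finset.mem_univ i) (by simp [hi])

lemma corr_key {m : ℕ} (g : (Fin m → ZMod 2) → ZMod 2) (b : Fin m → ZMod 2) :
    ∑ u : Fin m → ZMod 2, walshF g u * walshF g u * sgn (dotp u b)
      = 2 ^ m * ∑ x : Fin m → ZMod 2, sgn (g x + g (x + b)) := by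
  have step1 : ∀ u : Fin m → ZMod 2,
      walshF g u * walshF g u * sgn (dotp u b)
        = ∑ x : Fin m → ZMod 2, ∑ y : Fin m → ZMod 2,
            sgn (g x + g y) * sgn (dotp u (x + y + b)) := by
    intro u
    rw [walshF, walsh, Finset.sum_mul_sum, Finset.sum_mul]
    refine Finset.sum_congr rfl fun x _ => ?_
    rw [Finset.sum_mul]
    refine Finset.sum_congr rfl fun y _ => ?_
    simp only [dotp_add_right, sgn_add]
    ring
  simp_rw [step1]
  rw [Finset.sum_comm]
  have step2 : ∀ x : Fin m → ZMod 2,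
      ∑ u : Fin m → ZMod 2, ∑ y : Fin m → ZMod 2,
          sgn (g x + g y) * sgn (dotp u (x + y + b))
        = 2 ^ m * sgn (g x + g (x + b)) := by
    intro x
    rw [Finset.sum_comm]
    have h3 : ∀ y : Fin m → ZMod 2,
        ∑ u : Fin m → ZMod 2, sgn (g x + g y) * sgn (dotp u (x + y + b))
          = sgn (g x + g y) * (if x + y + b = 0 then (2:ℤ) ^ m else 0) := by
      intro y; rw [← Finset.mul_sum, sum_sgn_dotp]
    simp_rw [h3]
    have h4 : ∀ y : Fin m → ZMod 2, (x + y + b = 0) ↔ (y = x + b) := by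
      intro y
      constructor
      · intro h
        have : x + (x + y + b) + b = x + 0 + b := by rw [h]
        calc y = x + x + y + (b + b) := by rw [pi_add_self, pi_add_self]; abel
        _ = x + (x + y + b) + b := by abel
        _ = x + 0 + b := this
        _ = x + b := by rw [add_zero]
      · intro h; subst h
        calc x + (x + b) + b = (x + x) + (b + b) := by abel
        _ = 0 := by rw [pi_add_self, pi_add_self, add_zero]
    simp_rw [h4, mul_ite, mul_zero]
    rw [Finset.sum_ite_eq' Finset.univ (x + b) (fun y => sgn (g x + g y) * 2 ^ m)]
    simp [mul_comm]
  simp_rw [step2]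
  rw [← Finset.mul_sum]

lemma walsh_eq {m : ℕ} (g : (Fin m → ZMod 2) → ZMod 2) (u : Fin m → ZMod 2) :
    walshF g u = (if u = 0 then 2 ^ m else 0)
      - 2 * ∑ x ∈ Finset.univ.filter (fun x => g x = 1), sgn (dotp u x) := by
  have h1 : ∀ x : Fin m → ZMod 2, sgn (g x + dotp u x) = sgn (g x) * sgn (dotp u x) :=
    fun x => sgn_add _ _
  rw [walshF, walsh]
  simp_rw [h1]
  rw [← Finset.sum_filter_add_sum_filter_not Finset.univ (fun x => g x = 1)]
  have h2 : ∑ x ∈ Finset.univ.filter (fun x => g x = 1), sgn (g x) * sgn (dotp u x)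
      = -∑ x ∈ Finset.univ.filter (fun x => g x = 1), sgn (dotp u x) := by
    rw [← Finset.sum_neg_distrib]
    refine Finset.sum_congr rfl fun x hx => ?_
    have := (Finset.mem_filter.mp hx).2
    rw [this]
    have h1 : sgn 1 = -1 := by decide
    rw [h1]; ring
  have h3 : ∑ x ∈ Finset.univ.filter (fun x => ¬ g x = 1), sgn (g x) * sgn (dotp u x)
      = ∑ x ∈ Finset.univ.filter (fun x => ¬ g x = 1), sgn (dotp u x) := by
    refine Finset.sum_congr rfl fun x hx => ?_
    have hx2 := (Finset.mem_filter.mp hx).2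
    have : g x = 0 := by
      have : g x = 0 ∨ g x = 1 := by generalize g x = t; revert t; decide
      tauto
    rw [this]
    have h0 : sgn 0 = 1 := by decide
    rw [h0]; ring
  rw [h2, h3]
  have h4 : ∑ x ∈ Finset.univ.filter (fun x => ¬ g x = 1), sgn (dotp u x)
      = (if u = 0 then 2 ^ m else 0) - ∑ x ∈ Finset.univ.filter (fun x => g x = 1), sgn (dotp u x) := by
    have := Finset.sum_filter_add_sum_filter_not Finset.univ (fun x => g x = 1)
      (fun x => sgn (dotp u x))
    have h5 : ∑ x : Fin m → ZMod 2, sgn (dotp u x) = if u = 0 then 2 ^ m else 0 := by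
      simp_rw [dotp_comm u]; exact sum_sgn_dotp u
    rw [h5] at this
    linarith
  rw [h4]; ring



theorem stmt_18 (m r : ℕ) (hrm : r < m) (hpar : Even (m + r)) (hmr : (m, r) ≠ (2, 0))
    (g : (Fin m → ZMod 2) → ZMod 2)
    (hplat : ∀ a, walshF g a = 0 ∨ walshF g a = 2 ^ ((m + r) / 2) ∨
      walshF g a = -2 ^ ((m + r) / 2))
    (hls : ∀ a : Fin m → ZMod 2, a ≠ 0 → ¬ ∃ c : ZMod 2, ∀ x, g x + g (x + a) = c)
    (y₀ : Fin m → ZMod 2) (hy₀ : g y₀ = 1) :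
    Submodule.span (ZMod 2)
      {z : Fin m → ZMod 2 | ∃ y : Fin m → ZMod 2, g y = 1 ∧ z = y + y₀} = ⊤ := by
  by_contra hspan
  -- Step A: obtain a nonzero linear functional vanishing on the span
  have hann : (Submodule.span (ZMod 2)
      {z : Fin m → ZMod 2 | ∃ y : Fin m → ZMod 2, g y = 1 ∧ z = y + y₀}).dualAnnihilator ≠ ⊥ := by
    intro h
    apply hspan
    apply Subspace.dualAnnihilator_inj.mp
    rw [h, Submodule.dualAnnihilator_top]
  obtain ⟨φ, hφmem, hφne⟩ := Submodule.exists_mem_ne_zero_of_ne_bot hann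
  set a : Fin m → ZMod 2 := fun i => φ (fun j => if i = j then 1 else 0) with ha_def
  have hφa : ∀ x, φ x = dotp a x := by
    intro x
    conv_lhs => rw [pi_eq_sum_univ x]
    rw [map_sum, dotp]
    refine Finset.sum_congr rfl fun i _ => ?_
    rw [map_smul]
    simp [ha_def, smul_eq_mul, mul_comm]
  have ha : a ≠ 0 := by
    intro h0
    apply hφne
    apply LinearMap.ext
    intro x
    rw [hφa x, h0]
    simp [dotp]
  have hmem := (Submodule.mem_dualAnnihilator φ).mp hφmem
  have hDa : ∀ y, g y = 1 → dotp a y = dotp a y₀ := by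
    intro y hy
    have hz : (y + y₀) ∈ {z : Fin m → ZMod 2 | ∃ y : Fin m → ZMod 2, g y = 1 ∧ z = y + y₀} :=
      ⟨y, hy, rfl⟩
    have h0 := hmem _ (Submodule.subset_span hz)
    rw [hφa, dotp_add_right] at h0
    have h2 : ∀ p q : ZMod 2, p + q = 0 → p = q := by decide
    exact h2 _ _ h0
  -- setup
  set K := (m + r) / 2 with hKdef
  have h2K : 2 * K = m + r := by
    obtain ⟨k, hk⟩ := hpar
    omega
  set D := Finset.univ.filter (fun x => g x = 1) with hD
  set c := dotp a y₀ with hc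
  set ε := sgn c with hεdef
  have hε : ε = 1 ∨ ε = -1 := by
    rw [hεdef]; unfold sgn; split
    · left; rfl
    · right; rfl
  have hW : ∀ u, walshF g u = (if u = 0 then 2 ^ m else 0) - 2 * ∑ x ∈ D, sgn (dotp u x) :=
    fun u => walsh_eq g u
  have hStrans : ∀ u, (∑ x ∈ D, sgn (dotp (u + a) x)) = ε * ∑ x ∈ D, sgn (dotp u x) := by
    intro u
    rw [Finset.mul_sum]
    refine Finset.sum_congr rfl fun x hx => ?_
    have hgx := (Finset.mem_filter.mp hx).2
    rw [dotp_add_left, sgn_add, hDa x hgx, hεdef]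
    ring
  have hS0 : (∑ x ∈ D, sgn (dotp 0 x)) = (D.card : ℤ) := by
    have : ∀ x : Fin m → ZMod 2, dotp 0 x = 0 := by intro x; simp [dotp]
    simp [this, sgn]
  have hd1 : 1 ≤ (D.card : ℤ) := by
    have : y₀ ∈ D := Finset.mem_filter.mpr ⟨Finset.mem_univ _, hy₀⟩
    have := Finset.card_pos.mpr ⟨y₀, this⟩
    exact_mod_cast this
  have hSa : (∑ x ∈ D, sgn (dotp a x)) = ε * (D.card : ℤ) := by
    have := hStrans 0
    rw [zero_add, hS0] at this
    exact this
  have hWa : walshF g a = -(2 * ε * (D.card : ℤ)) := by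
    rw [hW a, if_neg ha, hSa]; ring
  have hpos : (0:ℤ) < 2 ^ K := by positivity
  have h2d : 2 * (D.card : ℤ) = 2 ^ K := by
    rcases hplat a with h | h | h <;> rw [hWa] at h <;>
      rcases hε with he | he <;> rw [he] at h <;> linarith
  have hW0 : walshF g 0 = 2 ^ m - 2 ^ K := by
    rw [hW 0, if_pos rfl, hS0]; linarith
  have hKm : K < m := by omega
  have hlt : (2:ℤ) ^ K < 2 ^ m := pow_lt_pow_right₀ (by norm_num) hKm
  have hmK : m = K + 1 := by
    rcases hplat 0 with h | h | h <;> rw [hW0] at h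
    · exfalso; linarith
    · by_contra hne
      have hK2 : K + 1 < m := by omega
      have : (2:ℤ) ^ (K+1) < 2 ^ m := pow_lt_pow_right₀ (by norm_num) hK2
      rw [pow_succ] at this
      linarith
    · exfalso
      have : (0:ℤ) < 2 ^ m := by positivity
      linarith
  have hm3 : 3 ≤ m := by
    have hmr' : ¬(m = 2 ∧ r = 0) := by simpa [Prod.ext_iff] using hmr
    omega
  -- Parseval
  have hcardfun : Fintype.card (Fin m → ZMod 2) = 2 ^ m := by
    simp [Fintype.card_fun]
  have hone : (∑ _x : Fin m → ZMod 2, (1:ℤ)) = 2 ^ m := by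
    rw [Finset.sum_const, Finset.card_univ, hcardfun, nsmul_eq_mul, mul_one]
    push_cast
    ring
  have hpars : (∑ u : Fin m → ZMod 2, walshF g u * walshF g u) = 2 ^ m * 2 ^ m := by
    have hck := corr_key g 0
    have h1 : ∀ u : Fin m → ZMod 2, dotp u (0 : Fin m → ZMod 2) = 0 := by
      intro u; simp [dotp]
    have h2 : ∀ x : Fin m → ZMod 2, g x + g (x + 0) = 0 := by
      intro x
      rw [add_zero]
      have : ∀ t : ZMod 2, t + t = 0 := by decide
      exact this _
    have hsgn0 : sgn 0 = 1 := by decide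
    simp only [h1, h2, hsgn0, mul_one] at hck
    rw [hck, hone]
  set N := Finset.univ.filter (fun u => walshF g u ≠ 0) with hN
  have hsq : ∀ u ∈ N, walshF g u * walshF g u = 2 ^ (2 * K) := by
    intro u hu
    have hu' := (Finset.mem_filter.mp hu).2
    rcases hplat u with h | h | h
    · exact absurd h hu'
    · rw [h, ← pow_add, two_mul]
    · rw [h, neg_mul_neg, ← pow_add, two_mul]
  have hsum : (∑ u ∈ N, walshF g u * walshF g u) = 2 ^ m * 2 ^ m := by
    rw [← hpars]
    apply Finset.sum_subset (Finset.filter_subset _ _)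
    intro x _ hx
    have : walshF g x = 0 := by
      by_contra hne
      exact hx (Finset.mem_filter.mpr ⟨Finset.mem_univ _, hne⟩)
    rw [this, mul_zero]
  have hcard4 : N.card = 4 := by
    have hcard : (N.card : ℤ) * 2 ^ (2 * K) = 2 ^ m * 2 ^ m := by
      rw [← hsum, Finset.sum_congr rfl hsq, Finset.sum_const, nsmul_eq_mul]
    have h1 : (2:ℤ) ^ m * 2 ^ m = 4 * 2 ^ (2 * K) := by
      rw [hmK, pow_succ, two_mul, pow_add]
      ring
    have hne : (2:ℤ) ^ (2 * K) ≠ 0 := by positivity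
    have h2 : (N.card : ℤ) = 4 := by
      apply mul_right_cancel₀ hne
      rw [hcard, h1]
    exact_mod_cast h2
  have h0N : (0 : Fin m → ZMod 2) ∈ N := by
    refine Finset.mem_filter.mpr ⟨Finset.mem_univ _, ?_⟩
    rw [hW0]
    intro h
    linarith
  have haN : a ∈ N := by
    refine Finset.mem_filter.mpr ⟨Finset.mem_univ _, ?_⟩
    rw [hWa]
    intro h
    rcases hε with he | he <;> rw [he] at h <;> linarith
  obtain ⟨u₁, hu₁N, hu₁⟩ : ∃ u₁ ∈ N, u₁ ∉ ({0, a} : Finset (Fin m → ZMod 2)) := by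
    by_contra hcon
    push_neg at hcon
    have hsub : N ⊆ ({0, a} : Finset (Fin m → ZMod 2)) := hcon
    have hc1 := Finset.card_le_card hsub
    have hc2 : ({0, a} : Finset (Fin m → ZMod 2)).card ≤ 2 :=
      (Finset.card_insert_le _ _).trans (by simp)
    omega
  have hu₁0 : u₁ ≠ 0 := by
    intro h; exact hu₁ (by rw [h]; exact Finset.mem_insert_self _ _)
  have hu₁a : u₁ ≠ a := by
    intro h; exact hu₁ (by rw [h]; simp)
  have hadd_cancel : ∀ x y : Fin m → ZMod 2, x + y + y = x := by
    intro x y; rw [add_assoc, pi_add_self, add_zero]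
  have hu₁a0 : u₁ + a ≠ 0 := by
    intro h
    apply hu₁a
    have := congrArg (· + a) h
    simp only [zero_add] at this
    rw [hadd_cancel] at this
    exact this
  have hWtrans : ∀ u, u ≠ 0 → u ≠ a → walshF g (u + a) = ε * walshF g u := by
    intro u h0 ha'
    have hua : u + a ≠ 0 := by
      intro h
      apply ha'
      have := congrArg (· + a) h
      simp only [zero_add] at this
      rw [hadd_cancel] at this
      exact this
    rw [hW (u + a), if_neg hua, hStrans u, hW u, if_neg h0]
    ring
  have hεne : ε ≠ 0 := by rcases hε with he | he <;> rw [he] <;> norm_num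
  have hu₁aN : u₁ + a ∈ N := by
    refine Finset.mem_filter.mpr ⟨Finset.mem_univ _, ?_⟩
    rw [hWtrans u₁ hu₁0 hu₁a]
    exact mul_ne_zero hεne (Finset.mem_filter.mp hu₁N).2
  have hu₁aa : u₁ + a ≠ a := by
    intro h
    apply hu₁0
    have := congrArg (· + a) h
    rw [hadd_cancel, pi_add_self] at this
    exact this
  have hu₁au₁ : u₁ + a ≠ u₁ := by
    intro h
    apply ha
    have := congrArg (· + u₁) h
    rw [add_comm u₁ a, hadd_cancel, pi_add_self] at this
    exact this
  have hMcard : ({0, a, u₁, u₁ + a} : Finset (Fin m → ZMod 2)).card = 4 := by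
    rw [Finset.card_insert_of_notMem, Finset.card_insert_of_notMem,
      Finset.card_insert_of_notMem, Finset.card_singleton]
    · simp [hu₁au₁.symm]
    · simp only [Finset.mem_insert, Finset.mem_singleton]
      push_neg
      exact ⟨fun h => hu₁a h.symm, fun h => hu₁aa h.symm⟩
    · simp only [Finset.mem_insert, Finset.mem_singleton]
      push_neg
      exact ⟨fun h => ha h.symm, fun h => hu₁0 h.symm, fun h => hu₁a0 h.symm⟩
  have hMN : ({0, a, u₁, u₁ + a} : Finset (Fin m → ZMod 2)) ⊆ N := by
    intro x hx
    simp only [Finset.mem_insert, Finset.mem_singleton] at hx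
    rcases hx with h | h | h | h <;> rw [h]
    · exact h0N
    · exact haN
    · exact hu₁N
    · exact hu₁aN
  have hNM : N = ({0, a, u₁, u₁ + a} : Finset (Fin m → ZMod 2)) :=
    (Finset.eq_of_subset_of_card_le hMN (by omega)).symm
  -- construct b
  have hdotp_smul : ∀ (s : ZMod 2) (w x : Fin m → ZMod 2), dotp w (s • x) = s * dotp w x := by
    intro s w x
    rw [dotp, dotp, Finset.mul_sum]
    refine Finset.sum_congr rfl fun i _ => ?_
    show w i * (s * x i) = s * (w i * x i)
    ring
  set ψ : (Fin m → ZMod 2) →ₗ[ZMod 2] (ZMod 2 × ZMod 2) :=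
    { toFun := fun x => (dotp a x, dotp u₁ x)
      map_add' := fun x y => by simp [dotp_add_right, Prod.ext_iff]
      map_smul' := fun s x => by simp [hdotp_smul, Prod.ext_iff, smul_eq_mul] } with hψ
  have hker : LinearMap.ker ψ ≠ ⊥ := by
    intro hk
    have hinj : Function.Injective ψ := LinearMap.ker_eq_bot.mp hk
    have hcard := Fintype.card_le_of_injective ψ hinj
    rw [hcardfun] at hcard
    have hc4 : Fintype.card (ZMod 2 × ZMod 2) = 4 := by simp
    rw [hc4] at hcard
    have : 2 ^ 3 ≤ 2 ^ m := Nat.pow_le_pow_right (by norm_num) hm3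
    omega
  obtain ⟨b, hbker, hb0⟩ := Submodule.exists_mem_ne_zero_of_ne_bot hker
  have hψb : ψ b = 0 := LinearMap.mem_ker.mp hbker
  have hab : dotp a b = 0 := congrArg Prod.fst hψb
  have hu₁b : dotp u₁ b = 0 := congrArg Prod.snd hψb
  have hNb : ∀ u ∈ N, dotp u b = 0 := by
    intro u hu
    rw [hNM] at hu
    simp only [Finset.mem_insert, Finset.mem_singleton] at hu
    rcases hu with h | h | h | h <;> rw [h]
    · simp [dotp]
    · exact hab
    · exact hu₁b
    · rw [dotp_add_left, hab, hu₁b, add_zero]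
  -- autocorrelation
  have hcorr := corr_key g b
  have hLHS : (∑ u : Fin m → ZMod 2, walshF g u * walshF g u * sgn (dotp u b))
      = 2 ^ m * 2 ^ m := by
    have hstep : (∑ u : Fin m → ZMod 2, walshF g u * walshF g u * sgn (dotp u b))
        = ∑ u ∈ N, walshF g u * walshF g u * sgn (dotp u b) := by
      symm
      apply Finset.sum_subset (Finset.filter_subset _ _)
      intro x _ hx
      have : walshF g x = 0 := by
        by_contra hne
        exact hx (Finset.mem_filter.mpr ⟨Finset.mem_univ _, hne⟩)
      rw [this, mul_zero, zero_mul]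
    rw [hstep, ← hsum]
    refine Finset.sum_congr rfl fun u hu => ?_
    rw [hNb u hu]
    have : sgn 0 = 1 := by decide
    rw [this, mul_one]
  rw [hLHS] at hcorr
  have hsumx : (∑ x : Fin m → ZMod 2, sgn (g x + g (x + b))) = 2 ^ m := by
    have h2m : (2:ℤ) ^ m ≠ 0 := by positivity
    exact (mul_left_cancel₀ h2m hcorr).symm
  have hall : ∀ x, g x + g (x + b) = 0 := by
    intro x
    by_contra hx0
    have hle : ∀ i : Fin m → ZMod 2, sgn (g i + g (i + b)) ≤ 1 := by
      intro i; unfold sgn; split <;> norm_num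
    have hlt2 : sgn (g x + g (x + b)) < 1 := by
      unfold sgn; rw [if_neg hx0]; norm_num
    have hs := Finset.sum_lt_sum (fun i (_ : i ∈ Finset.univ) => hle i)
      ⟨x, Finset.mem_univ x, hlt2⟩
    rw [hsumx, hone] at hs
    exact lt_irrefl _ hs
  exact hls b hb0 ⟨0, hall⟩
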